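/- arXiv:1907.03828 — 4 statements merged into one kernel-verified Lean document; each statement's English description precedes it below -/
import Mathlib

section
/- Let X be a finite metric space and λΔ a simplex of cardinality strictly greater than #X, with all non-zero distances equal to λ > 0. Then 2 d_GH(λΔ, X) = max{λ, diam X − λ}. -/
universe u_1 u_2

open Metric

/-- The Gromov–Hausdorff distance between two (bounded) metric spaces: the
infimum of Hausdorff distances between the canonical copies of `X` and `Y`
inside their disjoint union, over all pseudometrics on the disjoint union
extending the metrics of `X` and of `Y`. -/
noncomputable def ghDist (X : Type*) (Y : Type*) [MetricSpace X] [MetricSpace Y] : ℝ :=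
  sInf { r : ℝ | ∃ m : PseudoMetricSpace (X ⊕ Y),
    (∀ x x' : X, @Dist.dist _ m.toDist (Sum.inl x) (Sum.inl x') = dist x x') ∧
    (∀ y y' : Y, @Dist.dist _ m.toDist (Sum.inr y) (Sum.inr y') = dist y y') ∧
    r = @Metric.hausdorffDist (X ⊕ Y) m
        (Set.range Sum.inl) (Set.range Sum.inr) }

/-!
Write `K = max{l, diam X − l}`. Since `#X < #S` there is a surjection `g : S → X`; its graph is
a correspondence of distortion at most `K`, and gluing `S` and `X` along it puts every `s` at
distance `K / 2` from `g s`, so `d_GH ≤ K / 2`. Conversely, let `S` and `X` sit isometrically at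
Hausdorff distance `r` in a common space. Choosing for every `s` a point of `X` within `r` of it
cannot be injective, so two points of `S` lie within `r` of a common point and `l ≤ 2r`; and any
two points of `X` lie within `r` of points of `S`, which are at most `l` apart, so
`diam X ≤ 2r + l`.
-/

open Set Function Cardinal

section GromovHausdorff

variable {X : Type u_1} {Y : Type u_2} [MetricSpace X] [MetricSpace Y]

theorem le_ghDist {c : ℝ}
    (h : ∀ (Z : Type (max u_1 u_2)) [PseudoMetricSpace Z] (i : X → Z) (j : Y → Z),
      Isometry i → Isometry j → c ≤ hausdorffDist (range i) (range j)) :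
    c ≤ ghDist X Y := by
  refine le_csInf
    ⟨_, metricSpaceSum.toPseudoMetricSpace, fun _ _ => rfl, fun _ _ => rfl, rfl⟩ ?_
  rintro r ⟨m, hX, hY, rfl⟩
  exact @h (X ⊕ Y) m Sum.inl Sum.inr (.of_dist_eq hX) (.of_dist_eq hY)

theorem ghDist_le_of_surjective {Z : Type*} [Nonempty Z] {Φ : Z → X} {Ψ : Z → Y}
    (hΦ : Surjective Φ) (hΨ : Surjective Ψ) {ε : ℝ} (hε : 0 < ε)
    (H : ∀ p q, |dist (Φ p) (Φ q) - dist (Ψ p) (Ψ q)| ≤ 2 * ε) :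
    ghDist X Y ≤ ε := by
  let _ : MetricSpace (X ⊕ Y) := glueMetricApprox Φ Ψ ε hε H
  have hglued (p : Z) : dist (Sum.inl (Φ p) : X ⊕ Y) (Sum.inr (Ψ p)) = ε :=
    glueDist_glued_points Φ Ψ ε p
  refine csInf_le_of_le ⟨0, ?_⟩ ⟨inferInstance, fun _ _ => rfl, fun _ _ => rfl, rfl⟩ ?_
  · rintro r ⟨m, -, -, rfl⟩
    exact @hausdorffDist_nonneg _ m _ _
  refine hausdorffDist_le_of_mem_dist hε.le ?_ ?_
  · rintro _ ⟨x, rfl⟩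
    obtain ⟨p, rfl⟩ := hΦ x
    exact ⟨_, mem_range_self (Ψ p), (hglued p).le⟩
  · rintro _ ⟨y, rfl⟩
    obtain ⟨p, rfl⟩ := hΨ y
    exact ⟨_, mem_range_self (Φ p), by rw [dist_comm, hglued]⟩

end GromovHausdorff

section HausdorffDistance

variable {Z : Type*} [PseudoMetricSpace Z]

theorem le_two_mul_hausdorffDist_of_lift_mk_lt {S : Type u_1} {X : Type u_2} {i : S → Z}
    {j : X → Z} (hcard : lift.{u_1} #X < lift.{u_2} #S)
    (hfin : hausdorffEDist (range i) (range j) ≠ ⊤) {l : ℝ}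
    (hsep : ∀ s s', s ≠ s' → l ≤ dist (i s) (i s')) :
    l ≤ 2 * hausdorffDist (range i) (range j) := by
  refine le_of_forall_pos_le_add fun ε hε => ?_
  have hnear (s : S) : ∃ x, dist (i s) (j x) < hausdorffDist (range i) (range j) + ε / 2 := by
    obtain ⟨_, ⟨x, rfl⟩, hx⟩ := exists_dist_lt_of_hausdorffDist_lt (mem_range_self s)
      (lt_add_of_pos_right _ (half_pos hε)) hfin
    exact ⟨x, hx⟩
  choose φ hφ using hnear
  obtain ⟨s, s', hφs, hs⟩ := not_injective_iff.1 fun hinj =>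
    hcard.not_ge (lift_mk_le'.2 ⟨⟨φ, hinj⟩⟩)
  calc l ≤ dist (i s) (i s') := hsep s s' hs
    _ ≤ dist (i s) (j (φ s)) + dist (i s') (j (φ s')) := by
      rw [hφs]; exact dist_triangle_right _ _ _
    _ ≤ 2 * hausdorffDist (range i) (range j) + ε := by linarith [hφ s, hφ s']

theorem dist_le_two_mul_hausdorffDist_add {A B : Set Z} (hfin : hausdorffEDist A B ≠ ⊤) {c : ℝ}
    (hA : ∀ a ∈ A, ∀ a' ∈ A, dist a a' ≤ c) {b b' : Z} (hb : b ∈ B) (hb' : b' ∈ B) :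
    dist b b' ≤ 2 * hausdorffDist A B + c := by
  refine le_of_forall_pos_le_add fun ε hε => ?_
  have hlt := lt_add_of_pos_right (hausdorffDist A B) (half_pos hε)
  obtain ⟨a, ha, hab⟩ := exists_dist_lt_of_hausdorffDist_lt' hb hlt hfin
  obtain ⟨a', ha', hab'⟩ := exists_dist_lt_of_hausdorffDist_lt' hb' hlt hfin
  calc dist b b' ≤ dist a b + dist a a' + dist a' b' := by
        rw [dist_comm a b]; exact dist_triangle4 _ _ _ _
    _ ≤ 2 * hausdorffDist A B + c + ε := by linarith [hA a ha a' ha']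

end HausdorffDistance

theorem nontrivial_of_lift_mk_lt {X : Type u_1} {S : Type u_2} [Nonempty X]
    (hcard : lift.{u_2} #X < lift.{u_1} #S) : Nontrivial S := by
  rw [← one_lt_iff_nontrivial, ← one_lt_lift_iff.{u_2, u_1}]
  exact lt_of_le_of_lt (by simpa using Cardinal.one_le_iff_ne_zero.2 (mk_ne_zero X)) hcard

section Simplex

variable {l : ℝ}

theorem dist_le_of_forall_ne_dist_eq {S : Type*} [PseudoMetricSpace S] (hl : 0 ≤ l)
    (hsim : ∀ s s' : S, s ≠ s' → dist s s' = l) (s s' : S) : dist s s' ≤ l := by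
  rcases eq_or_ne s s' with rfl | h
  · simpa using hl
  · exact (hsim s s' h).le

theorem pos_of_forall_ne_dist_eq {S : Type*} [MetricSpace S] [Nontrivial S]
    (hsim : ∀ s s' : S, s ≠ s' → dist s s' = l) : 0 < l := by
  obtain ⟨s, s', h⟩ := exists_pair_ne S
  exact hsim s s' h ▸ dist_pos.2 h

theorem abs_dist_sub_dist_le_of_forall_ne_dist_eq {S X : Type*} [PseudoMetricSpace S]
    [PseudoMetricSpace X] [BoundedSpace X] (hl : 0 ≤ l)
    (hsim : ∀ s s' : S, s ≠ s' → dist s s' = l) (g : S → X) (s s' : S) :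
    |dist s s' - dist (g s) (g s')| ≤ max l (diam (univ : Set X) - l) := by
  rcases eq_or_ne s s' with rfl | h
  · simp [hl]
  have hdiam : dist (g s) (g s') ≤ diam (univ : Set X) :=
    dist_le_diam_of_mem (Bornology.isBounded_univ.2 ‹_›) (mem_univ _) (mem_univ _)
  rw [hsim s s' h, abs_sub_le_iff]
  constructor <;> linarith [le_max_left l (diam (univ : Set X) - l),
    le_max_right l (diam (univ : Set X) - l), dist_nonneg (x := g s) (y := g s')]

theorem max_le_two_mul_hausdorffDist_of_forall_ne_dist_eq {S : Type u_2} [PseudoMetricSpace S]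
    [Nonempty S] {X : Type u_1} [PseudoMetricSpace X] [BoundedSpace X] [Nonempty X]
    (hl : 0 ≤ l) (hsim : ∀ s s' : S, s ≠ s' → dist s s' = l)
    (hcard : lift.{u_2} #X < lift.{u_1} #S) {Z : Type*} [PseudoMetricSpace Z] {i : S → Z}
    {j : X → Z} (hi : Isometry i) (hj : Isometry j) :
    max l (diam (univ : Set X) - l) ≤ 2 * hausdorffDist (range i) (range j) := by
  have hiS : ∀ a ∈ range i, ∀ a' ∈ range i, dist a a' ≤ l := by
    rintro _ ⟨s, rfl⟩ _ ⟨s', rfl⟩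
    rw [hi.dist_eq]
    exact dist_le_of_forall_ne_dist_eq hl hsim s s'
  have hfin : hausdorffEDist (range i) (range j) ≠ ⊤ :=
    hausdorffEDist_ne_top_of_nonempty_of_bounded (range_nonempty i) (range_nonempty j)
      (isBounded_iff.2 ⟨l, hiS⟩)
      (by simpa using hj.lipschitz.isBounded_image (Bornology.isBounded_univ.2 ‹_›))
  refine max_le (le_two_mul_hausdorffDist_of_lift_mk_lt hcard hfin fun s s' h => ?_) ?_
  · rw [hi.dist_eq, hsim s s' h]
  have hr : 0 ≤ 2 * hausdorffDist (range i) (range j) + l := by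
    linarith [hausdorffDist_nonneg (s := range i) (t := range j)]
  rw [sub_le_iff_le_add]
  refine diam_le_of_forall_dist_le hr fun x _ x' _ => ?_
  rw [← hj.dist_eq]
  exact dist_le_two_mul_hausdorffDist_add hfin hiS (mem_range_self x) (mem_range_self x')

end Simplex

theorem two_ghDist_simplex_of_card_lt_general {X : Type u_1} [MetricSpace X] [Finite X] [Nonempty X]
    (S : Type u_2) [MetricSpace S]
    (l : ℝ)
    (hsim : ∀ s s' : S, s ≠ s' → dist s s' = l)
    (hcard : Cardinal.lift.{u_2} (Cardinal.mk X) < Cardinal.lift.{u_1} (Cardinal.mk S)) :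
    2 * ghDist S X = max l (diam (Set.univ : Set X) - l) := by
  obtain ⟨f⟩ : Nonempty (X ↪ S) := lift_mk_le'.1 hcard.le
  have : Nontrivial S := nontrivial_of_lift_mk_lt hcard
  have hl : 0 < l := pos_of_forall_ne_dist_eq hsim
  set K := max l (diam (univ : Set X) - l)
  have hK : 0 < K := lt_max_of_lt_left hl
  refine le_antisymm ?_ ?_
  · have := ghDist_le_of_surjective surjective_id (invFun_surjective f.injective) (half_pos hK)
      fun s s' => by
        rw [mul_div_cancel₀ K two_ne_zero]
        exact abs_dist_sub_dist_le_of_forall_ne_dist_eq hl.le hsim _ s s'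
    linarith
  · have : K / 2 ≤ ghDist S X := le_ghDist fun Z _ i j hi hj => by
      linarith [max_le_two_mul_hausdorffDist_of_forall_ne_dist_eq hl.le hsim hcard hi hj]
    linarith

/-- If `X` is a finite metric space and `S` is a simplex (all of whose non-zero
distances equal `λ > 0`) of cardinality strictly greater than that of `X`, then
`2 d_GH(S, X) = max {λ, diam X − λ}`. -/
theorem two_ghDist_simplex_of_card_lt {X : Type u_1} [MetricSpace X] [Finite X] [Nonempty X]
    (S : Type u_2) [MetricSpace S]
    (l : ℝ) (hl : 0 < l)
    (hsim : ∀ s s' : S, s ≠ s' → dist s s' = l)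
    (hcard : Cardinal.lift.{u_2} (Cardinal.mk X) < Cardinal.lift.{u_1} (Cardinal.mk S)) :
    2 * ghDist S X = max l (diam (Set.univ : Set X) - l) :=
  two_ghDist_simplex_of_card_lt_general S l hsim hcard
end

section
/- Let X be a finite metric space and G a minimal spanning tree on X. Then X is ultrametric if and only if for every pair of distinct points v, w ∈ X, |vw| equals the maximum of the lengths of the edges on the unique path in G from v to w. -/
/-!
Along any walk from `v` to `w`, the ultrametric inequality bounds `|vw|` by the longest edge.
Conversely, in a minimal spanning tree no edge `e` on the path from `v` to `w` is longer than
`|vw|`: otherwise exchanging `e` for the edge `vw` would give a shorter spanning tree.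
For the reverse implication, the tree path from `x` to `z` lies in the union of the paths from
`x` to `y` and from `y` to `z`, so its longest edge, of length `|xz|`, is bounded by
`max |xy| |yz|`.
-/

open Metric

/-- The length of an edge of a graph on a metric space: the distance between
its endpoints. -/
noncomputable def edgeLen {X : Type*} [MetricSpace X] : Sym2 X → ℝ :=
  Sym2.lift ⟨fun x y => dist x y, fun x y => dist_comm x y⟩

/-- The total length of a graph on a metric space: the sum of the lengths of
its edges. -/
noncomputable def graphLength {X : Type*} [MetricSpace X] (G : SimpleGraph X) : ℝ :=
  ∑ᶠ e ∈ G.edgeSet, edgeLen e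

/-- `G` is a minimal spanning tree on the metric space `X`: a tree with vertex
set `X` of minimal total length among all such trees. -/
def IsMST {X : Type*} [MetricSpace X] (G : SimpleGraph X) : Prop :=
  G.IsTree ∧ ∀ H : SimpleGraph X, H.IsTree → graphLength G ≤ graphLength H

/-- The path-max property for a graph `G` on a metric space: for any two
distinct vertices `v, w`, the distance `|vw|` equals the maximum of the
lengths of the edges on any (in a tree: the unique) path in `G` from `v`
to `w`. -/
def PathMaxProperty {X : Type*} [MetricSpace X] (G : SimpleGraph X) : Prop :=
  ∀ v w : X, v ≠ w → ∀ p : G.Walk v w, p.IsPath →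
    (∃ e ∈ p.edges, edgeLen e = dist v w) ∧ ∀ e ∈ p.edges, edgeLen e ≤ dist v w

open SimpleGraph

namespace SimpleGraph

variable {V : Type*} {G H : SimpleGraph V} {v w : V} {e : Sym2 V}

lemma reachable_le_of_adj_le_reachable (h : G.Adj ≤ H.Reachable) :
    G.Reachable ≤ H.Reachable := by
  rw [reachable_eq_reflTransGen] at h ⊢
  rw [reachable_eq_reflTransGen]
  exact Relation.reflTransGen_closed h

lemma Walk.IsPath.ne_of_mem_edges {p : G.Walk v w} (hp : p.IsPath) (he : e ∈ p.edges) :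
    v ≠ w := by
  rintro rfl
  simp [(Walk.isPath_iff_nil.mp hp).eq_nil] at he

lemma Walk.IsTrail.exists_reachable_deleteEdges_of_mem_edges {p : G.Walk v w} (hp : p.IsTrail)
    (he : e ∈ p.edges) : ∃ a b, e = s(a, b) ∧ (G.deleteEdges {e}).Reachable v a ∧
      (G.deleteEdges {e}).Reachable b w := by
  induction p with
  | nil => simp at he
  | @cons x u y ha q ih =>
    rw [Walk.isTrail_cons] at hp
    rw [Walk.edges_cons, List.mem_cons] at he
    rcases he with rfl | he
    · exact ⟨x, u, rfl, .rfl, ⟨q.toDeleteEdge _ hp.2⟩⟩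
    · obtain ⟨a, b, rfl, hxa, hbw⟩ := ih hp.1 he
      have hxu : (G.deleteEdges {s(a, b)}).Adj x u := by
        simp only [deleteEdges_adj, Set.mem_singleton_iff]
        exact ⟨ha, fun h => hp.2 (h ▸ he)⟩
      exact ⟨a, b, rfl, hxu.reachable.trans hxa, hbw⟩

lemma IsAcyclic.not_reachable_deleteEdges_of_mem_edges (hG : G.IsAcyclic) {p : G.Walk v w}
    (hp : p.IsPath) (he : e ∈ p.edges) : ¬(G.deleteEdges {e}).Reachable v w := by
  classical
  rintro ⟨q⟩
  let r := (q.mapLe (G.deleteEdges_le {e})).bypass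
  have hpr : p = r :=
    congrArg Subtype.val ((hG.subsingleton_path v w).elim ⟨p, hp⟩ ⟨r, Walk.bypass_isPath _⟩)
  have her : e ∈ q.edges := by
    rw [← Walk.edges_mapLe_eq_edges (G.deleteEdges_le {e})]
    exact Walk.edges_bypass_subset_edges _ (hpr ▸ he : e ∈ r.edges)
  simpa using q.edges_subset_edgeSet her

lemma IsTree.sup_edge_deleteEdges {p : G.Walk v w} (hG : G.IsTree) (hp : p.IsPath)
    (he : e ∈ p.edges) : (G.deleteEdges {e} ⊔ edge v w).IsTree := by
  set T := G.deleteEdges {e} ⊔ edge v w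
  have hvw : T.Adj v w :=
    Or.inr ((edge_adj ..).mpr ⟨Or.inl ⟨rfl, rfl⟩, hp.ne_of_mem_edges he⟩)
  obtain ⟨a, b, rfl, hva, hbw⟩ := hp.isTrail.exists_reachable_deleteEdges_of_mem_edges he
  have hab : T.Reachable a b :=
    ((hva.mono le_sup_left).symm.trans hvw.reachable).trans (hbw.mono le_sup_left).symm
  have hadj : G.Adj ≤ T.Reachable := by
    intro x y hxy
    by_cases hxy' : s(x, y) = s(a, b)
    · rcases Sym2.eq_iff.mp hxy' with ⟨rfl, rfl⟩ | ⟨rfl, rfl⟩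
      exacts [hab, hab.symm]
    · refine Adj.reachable (Or.inl ?_)
      simp only [deleteEdges_adj, Set.mem_singleton_iff]
      exact ⟨hxy, hxy'⟩
  refine ⟨?_, (hG.isAcyclic.anti (G.deleteEdges_le _)).sup_edge_of_not_reachable
    (hG.isAcyclic.not_reachable_deleteEdges_of_mem_edges hp he)⟩
  have : Nonempty V := ⟨v⟩
  exact ⟨fun x y => reachable_le_of_adj_le_reachable hadj x y (hG.connected.preconnected x y)⟩

end SimpleGraph

section Metric

variable {X : Type*} [MetricSpace X] {G : SimpleGraph X} {v w : X}

lemma edgeLen_mk (a b : X) : edgeLen s(a, b) = dist a b := rfl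

lemma graphLength_sup_edge_deleteEdges [Finite X] {e : Sym2 X} (he : e ∈ G.edgeSet)
    (hvw : v ≠ w) (hnew : ¬(G.deleteEdges {e}).Adj v w) :
    graphLength (G.deleteEdges {e} ⊔ edge v w) + edgeLen e = graphLength G + dist v w := by
  have hnew' : s(v, w) ∉ G.edgeSet \ {e} := by rwa [← edgeSet_deleteEdges, mem_edgeSet]
  have hG : graphLength G = edgeLen e + ∑ᶠ f ∈ G.edgeSet \ {e}, edgeLen f := by
    rw [graphLength, ← finsum_mem_insert _ (fun h => h.2 rfl) (Set.toFinite _),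
      Set.insert_sdiff_singleton, Set.insert_eq_of_mem he]
  rw [hG, graphLength, edgeSet_sup, edgeSet_deleteEdges, edgeSet_edge_of_ne hvw,
    Set.union_singleton, finsum_mem_insert _ hnew' (Set.toFinite _), edgeLen_mk]
  ring

lemma IsMST.edgeLen_le_dist [Finite X] (hG : IsMST G) {p : G.Walk v w} (hp : p.IsPath)
    {e : Sym2 X} (he : e ∈ p.edges) : edgeLen e ≤ dist v w := by
  have hsep := hG.1.isAcyclic.not_reachable_deleteEdges_of_mem_edges hp he
  have hlen := graphLength_sup_edge_deleteEdges (p.edges_subset_edgeSet he)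
    (hp.ne_of_mem_edges he) fun h => hsep h.reachable
  linarith [hG.2 _ (hG.1.sup_edge_deleteEdges hp he)]

lemma exists_mem_edges_dist_le_edgeLen (hU : ∀ x y z : X, dist x z ≤ max (dist x y) (dist y z))
    (p : G.Walk v w) (hvw : v ≠ w) : ∃ e ∈ p.edges, dist v w ≤ edgeLen e := by
  induction p with
  | nil => exact absurd rfl hvw
  | @cons x u y _ q ih =>
    rcases le_max_iff.mp (hU x u y) with hxu | huy
    · exact ⟨s(x, u), by simp, hxu⟩
    · have huy' : u ≠ y := by
        rintro rfl
        exact hvw (dist_le_zero.mp (by simpa using huy))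
      obtain ⟨e, he, hle⟩ := ih huy'
      exact ⟨e, List.mem_cons_of_mem _ he, huy.trans hle⟩

lemma PathMaxProperty.edgeLen_le (hPM : PathMaxProperty G) {p : G.Walk v w} (hp : p.IsPath)
    {e : Sym2 X} (he : e ∈ p.edges) : edgeLen e ≤ dist v w :=
  (hPM v w (hp.ne_of_mem_edges he) p hp).2 e he

lemma PathMaxProperty.dist_le_max (hPM : PathMaxProperty G) (hG : G.Preconnected) (x y z : X) :
    dist x z ≤ max (dist x y) (dist y z) := by
  classical
  obtain rfl | hxz := eq_or_ne x z
  · simp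
  obtain ⟨p, hp⟩ := (hG x y).exists_isPath
  obtain ⟨q, hq⟩ := (hG y z).exists_isPath
  obtain ⟨⟨e, he, hlen⟩, -⟩ := hPM x z hxz _ (p.append q).bypass_isPath
  rw [← hlen]
  have he' := Walk.edges_bypass_subset_edges _ he
  rw [Walk.edges_append, List.mem_append] at he'
  rcases he' with he' | he'
  · exact (hPM.edgeLen_le hp he').trans (le_max_left _ _)
  · exact (hPM.edgeLen_le hq he').trans (le_max_right _ _)

end Metric

/-- A finite metric space `X` is ultrametric if and only if, for a minimal
spanning tree `G` on `X` and any distinct `v, w ∈ X`, the distance `|vw|`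
equals the maximum of the edge lengths on the unique path in `G` from `v`
to `w`. -/
theorem ultrametric_iff_pathMax {X : Type*} [MetricSpace X] [Finite X]
    (G : SimpleGraph X) (hG : IsMST G) :
    (∀ x y z : X, dist x z ≤ max (dist x y) (dist y z)) ↔ PathMaxProperty G := by
  refine ⟨fun hU v w hvw p hp => ?_, fun hPM => hPM.dist_le_max hG.1.connected.preconnected⟩
  have hle : ∀ e ∈ p.edges, edgeLen e ≤ dist v w := fun e he => hG.edgeLen_le_dist hp he
  obtain ⟨e, he, hge⟩ := exists_mem_edges_dist_le_edgeLen hU p hvw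
  exact ⟨⟨e, he, le_antisymm (hle e he) hge⟩, hle⟩
end

section
/- If X is a finite ultrametric space and G a minimal spanning tree on X, then for every distinct pair v, w ∈ X, |vw| is one of the edge lengths of G. In particular, diam X equals the maximal edge length of G. -/
open Metric

section Aux

lemma edgeLen_mk_s8 {X : Type*} [MetricSpace X] (x y : X) : edgeLen s(x, y) = dist x y := rfl

lemma edgeLen_nonneg {X : Type*} [MetricSpace X] (e : Sym2 X) : 0 ≤ edgeLen e := by
  induction e using Sym2.ind with
  | _ x y => exact dist_nonneg

lemma graphLength_eq_sum {X : Type*} [MetricSpace X] [Fintype X]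
    (G : SimpleGraph X) [Fintype G.edgeSet] :
    graphLength G = ∑ e ∈ G.edgeFinset, edgeLen e := by
  rw [graphLength, ← SimpleGraph.coe_edgeFinset G, finsum_mem_coe_finset]

/-- Transfer reachability along a map of graphs that sends adjacency to
reachability. -/
lemma reach_transfer {V : Type*} {A B : SimpleGraph V}
    (h : ∀ x y : V, A.Adj x y → B.Reachable x y) {x y : V} (r : A.Reachable x y) :
    B.Reachable x y := by
  obtain ⟨p⟩ := r
  induction p with
  | nil => exact SimpleGraph.Reachable.refl _
  | cons ha _ ih => exact (h _ _ ha).trans ih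

/-- Removing an edge that lies on a trail keeps the pieces of the trail
connected (in one orientation or the other). -/
lemma reach_of_mem_edges {V : Type*} {G : SimpleGraph V} {v w : V} (p : G.Walk v w)
    (hnd : p.edges.Nodup) {a b : V} (hab : s(a, b) ∈ p.edges) :
    ((G.deleteEdges {s(a, b)}).Reachable v a ∧ (G.deleteEdges {s(a, b)}).Reachable b w) ∨
      ((G.deleteEdges {s(a, b)}).Reachable v b ∧ (G.deleteEdges {s(a, b)}).Reachable a w) := by
  induction p with
  | nil => simp at hab
  | @cons v x w hadj q ih =>
    rw [SimpleGraph.Walk.edges_cons, List.nodup_cons] at hnd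
    rw [SimpleGraph.Walk.edges_cons, List.mem_cons] at hab
    rcases hab with hab | hab
    · -- the removed edge is the first edge of the walk
      have hq : (G.deleteEdges {s(a, b)}).Reachable x w := by
        refine ⟨q.toDeleteEdges _ ?_⟩
        intro e he hes
        rw [Set.mem_singleton_iff] at hes
        exact hnd.1 (hab ▸ hes ▸ he)
      rw [Sym2.eq_iff] at hab
      rcases hab with ⟨hv, hx⟩ | ⟨hv, hx⟩
      · subst hv; subst hx
        exact Or.inl ⟨SimpleGraph.Reachable.refl _, hq⟩
      · subst hv; subst hx
        exact Or.inr ⟨SimpleGraph.Reachable.refl _, hq⟩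
    · have hvx : (G.deleteEdges {s(a, b)}).Adj v x := by
        rw [SimpleGraph.deleteEdges_adj]
        refine ⟨hadj, ?_⟩
        rw [Set.mem_singleton_iff]
        intro hh
        exact hnd.1 (hh ▸ hab)
      rcases ih hnd.2 hab with ⟨h1, h2⟩ | ⟨h1, h2⟩
      · exact Or.inl ⟨hvx.reachable.trans h1, h2⟩
      · exact Or.inr ⟨hvx.reachable.trans h1, h2⟩

/-- Every connected graph on a finite vertex type contains a spanning tree. -/
lemma exists_tree_le_aux {V : Type*} [Fintype V] :
    ∀ (n : ℕ) (G : SimpleGraph V), G.edgeSet.ncard ≤ n → G.Connected →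
      ∃ T : SimpleGraph V, T ≤ G ∧ T.IsTree := by
  classical
  intro n
  induction n with
  | zero =>
    intro G hcard hc
    refine ⟨G, le_refl _, hc, ?_⟩
    have hbot : G = ⊥ := by
      rw [← SimpleGraph.edgeSet_eq_empty]
      exact (Set.ncard_eq_zero G.edgeSet.toFinite).mp (Nat.le_zero.mp hcard)
    subst hbot
    exact SimpleGraph.isAcyclic_bot
  | succ n ih =>
    intro G hcard hc
    by_cases hac : G.IsAcyclic
    · exact ⟨G, le_refl _, hc, hac⟩
    · rw [SimpleGraph.isAcyclic_iff_forall_adj_isBridge] at hac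
      push_neg at hac
      obtain ⟨v, w, hadj, hnb⟩ := hac
      rw [SimpleGraph.isBridge_iff] at hnb
      push_neg at hnb
      have hreach : (G.deleteEdges {s(v, w)}).Reachable v w := hnb
      set G' : SimpleGraph V := G.deleteEdges {s(v, w)} with hG'
      have hle : G' ≤ G := by
        intro a b hab
        exact (SimpleGraph.deleteEdges_adj.mp hab).1
      haveI : Nonempty V := hc.nonempty
      have hc' : G'.Connected := by
        refine ⟨fun a b => ?_⟩
        refine reach_transfer ?_ (hc.preconnected a b)
        intro x y hxy
        by_cases hxyvw : s(x, y) = s(v, w)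
        · rw [Sym2.eq_iff] at hxyvw
          rcases hxyvw with ⟨hx, hy⟩ | ⟨hx, hy⟩
          · subst hx; subst hy; exact hreach
          · subst hx; subst hy; exact hreach.symm
        · exact SimpleGraph.Adj.reachable
            (SimpleGraph.deleteEdges_adj.mpr ⟨hxy, by simpa using hxyvw⟩)
      have hedge : G'.edgeSet = G.edgeSet \ {s(v, w)} := SimpleGraph.edgeSet_deleteEdges _
      have hcard' : G'.edgeSet.ncard ≤ n := by
        rw [hedge, Set.ncard_diff_singleton_of_mem (G.mem_edgeSet.mpr hadj)]
        omega
      obtain ⟨T, hT1, hT2⟩ := ih G' hcard' hc'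
      exact ⟨T, hT1.trans hle, hT2⟩

lemma exists_tree_le {V : Type*} [Finite V] (G : SimpleGraph V) (hc : G.Connected) :
    ∃ T : SimpleGraph V, T ≤ G ∧ T.IsTree := by
  have := Fintype.ofFinite V
  classical
  exact exists_tree_le_aux G.edgeSet.ncard G le_rfl hc

/-- The ultrametric inequality along a walk: the distance between the endpoints
is bounded by the length of some edge of the walk. -/
lemma dist_le_walk_edge {X : Type*} [MetricSpace X]
    (ultra : ∀ x y z : X, dist x z ≤ max (dist x y) (dist y z))
    {G : SimpleGraph X} {v w : X} (p : G.Walk v w) (hvw : v ≠ w) :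
    ∃ e ∈ p.edges, dist v w ≤ edgeLen e := by
  induction p with
  | nil => exact absurd rfl hvw
  | @cons v x w hadj q ih =>
    by_cases hxw : x = w
    · subst hxw
      exact ⟨s(v, x), by simp, le_of_eq rfl⟩
    · obtain ⟨e, he, hle⟩ := ih hxw
      have := ultra v x w
      rcases le_max_iff.mp this with h | h
      · exact ⟨s(v, x), by simp, h⟩
      · exact ⟨e, by simp [he], h.trans hle⟩

end Aux

/-- In a finite ultrametric space `X` with minimal spanning tree `G`, every
distance between distinct points is the length of some edge of `G`; in
particular, the diameter of `X` equals the maximal edge length of `G`. -/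
theorem ultrametric_dist_mem_mst_spectrum {X : Type*} [MetricSpace X] [Finite X]
    (ultra : ∀ x y z : X, dist x z ≤ max (dist x y) (dist y z))
    (G : SimpleGraph X) (hG : IsMST G) :
    (∀ v w : X, v ≠ w → ∃ e ∈ G.edgeSet, edgeLen e = dist v w) ∧
    Metric.diam (Set.univ : Set X) = sSup (edgeLen '' G.edgeSet) := by
  have := Fintype.ofFinite X
  classical
  obtain ⟨⟨hconn, hacyc⟩, hmin⟩ := hG
  -- main claim
  have main : ∀ v w : X, v ≠ w → ∃ e ∈ G.edgeSet, edgeLen e = dist v w := by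
    intro v w hvw
    obtain ⟨p₀⟩ := hconn.preconnected v w
    obtain ⟨p, hp⟩ := p₀.toPath
    -- the cycle exchange property: every edge on the path is short
    have cycleProp : ∀ e ∈ p.edges, edgeLen e ≤ dist v w := by
      intro e he
      by_contra hgt
      push_neg at hgt
      induction e using Sym2.ind with
      | _ a b =>
      -- the exchange graph
      set H : SimpleGraph X :=
        SimpleGraph.fromEdgeSet ((G.edgeSet \ {s(a, b)}) ∪ {s(v, w)}) with hH
      have hHadj : ∀ x y : X, (G.deleteEdges {s(a, b)}).Adj x y → H.Adj x y := by
        intro x y hxy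
        rw [SimpleGraph.deleteEdges_adj] at hxy
        rw [hH, SimpleGraph.fromEdgeSet_adj]
        exact ⟨Or.inl ⟨hxy.1, hxy.2⟩, hxy.1.ne⟩
      have hHvw : H.Adj v w := by
        rw [hH, SimpleGraph.fromEdgeSet_adj]
        exact ⟨Or.inr rfl, hvw⟩
      have hHab : H.Reachable a b := by
        rcases reach_of_mem_edges p hp.isTrail.edges_nodup he with ⟨h1, h2⟩ | ⟨h1, h2⟩
        · exact ((reach_transfer (fun x y h => (hHadj x y h).reachable) h1).symm.trans hHvw.reachable).trans
            (reach_transfer (fun x y h => (hHadj x y h).reachable) h2).symm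
        · exact (((reach_transfer (fun x y h => (hHadj x y h).reachable) h1).symm.trans hHvw.reachable).trans
            (reach_transfer (fun x y h => (hHadj x y h).reachable) h2).symm).symm
      haveI : Nonempty X := hconn.nonempty
      have hHconn : H.Connected := by
        refine ⟨fun x y => ?_⟩
        refine reach_transfer ?_ (hconn.preconnected x y)
        intro c d hcd
        by_cases hcdab : s(c, d) = s(a, b)
        · rw [Sym2.eq_iff] at hcdab
          rcases hcdab with ⟨hc, hd⟩ | ⟨hc, hd⟩
          · subst hc; subst hd; exact hHab
          · subst hc; subst hd; exact hHab.symm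
        · refine SimpleGraph.Adj.reachable ?_
          rw [hH, SimpleGraph.fromEdgeSet_adj]
          exact ⟨Or.inl ⟨hcd, by simpa using hcdab⟩, hcd.ne⟩
      obtain ⟨T, hTle, hTtree⟩ := exists_tree_le H hHconn
      -- length estimates
      have habG : s(a, b) ∈ G.edgeSet := p.edges_subset_edgeSet he
      have hTsub : T.edgeFinset ⊆ insert s(v, w) (G.edgeFinset.erase s(a, b)) := by
        intro e' he'
        rw [SimpleGraph.mem_edgeFinset] at he'
        have := SimpleGraph.edgeSet_mono hTle he'
        rw [hH, SimpleGraph.edgeSet_fromEdgeSet] at this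
        rcases this.1 with ⟨h1, h2⟩ | h1
        · exact Finset.mem_insert_of_mem (Finset.mem_erase.mpr
            ⟨by simpa using h2, SimpleGraph.mem_edgeFinset.mpr h1⟩)
        · exact Finset.mem_insert.mpr (Or.inl h1)
      have hsum1 : graphLength T ≤
          ∑ e' ∈ insert s(v, w) (G.edgeFinset.erase s(a, b)), edgeLen e' := by
        rw [graphLength_eq_sum]
        exact Finset.sum_le_sum_of_subset_of_nonneg hTsub
          (fun i _ _ => edgeLen_nonneg i)
      have hsum2 : ∑ e' ∈ insert s(v, w) (G.edgeFinset.erase s(a, b)), edgeLen e' ≤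
          dist v w + (graphLength G - edgeLen s(a, b)) := by
        have herase : ∑ e' ∈ G.edgeFinset.erase s(a, b), edgeLen e' =
            graphLength G - edgeLen s(a, b) := by
          rw [graphLength_eq_sum,
            Finset.sum_erase_eq_sub (SimpleGraph.mem_edgeFinset.mpr habG)]
        by_cases hmem : s(v, w) ∈ G.edgeFinset.erase s(a, b)
        · rw [Finset.insert_eq_self.mpr hmem, herase]
          have : (0:ℝ) ≤ dist v w := dist_nonneg
          linarith
        · rw [Finset.sum_insert hmem, herase, edgeLen_mk_s8]
      have := hmin T hTtree
      have hlt : dist v w + (graphLength G - edgeLen s(a, b)) < graphLength G := by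
        linarith
      linarith
    obtain ⟨e, he, hle⟩ := dist_le_walk_edge ultra p hvw
    exact ⟨e, p.edges_subset_edgeSet he, le_antisymm (cycleProp e he) hle⟩
  refine ⟨main, ?_⟩
  -- the diameter statement
  have hfin : (edgeLen '' G.edgeSet).Finite := (G.edgeSet.toFinite).image _
  have hnonneg : ∀ x ∈ edgeLen '' G.edgeSet, 0 ≤ x := by
    rintro x ⟨e, _, rfl⟩
    exact edgeLen_nonneg e
  refine le_antisymm ?_ ?_
  · refine Metric.diam_le_of_forall_dist_le (Real.sSup_nonneg hnonneg) ?_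
    intro x _ y _
    by_cases hxy : x = y
    · subst hxy
      simp [Real.sSup_nonneg hnonneg]
    · obtain ⟨e, he, hle⟩ := main x y hxy
      rw [← hle]
      exact le_csSup hfin.bddAbove ⟨e, he, rfl⟩
  · refine Real.sSup_le ?_ Metric.diam_nonneg
    rintro x ⟨e, he, rfl⟩
    induction e using Sym2.ind with
    | _ a b =>
    rw [edgeLen_mk_s8]
    exact Metric.dist_le_diam_of_mem (Set.finite_univ.isBounded)
      (Set.mem_univ a) (Set.mem_univ b)
end

section
/- Let X be a finite metric space and suppose there exists a spanning tree G on X such that for all distinct v, w ∈ X, |vw| equals the maximum edge length along the unique G-path from v to w. Then X is ultrametric. -/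
open Metric

namespace PathMaxProperty

open SimpleGraph

variable {X : Type*} [MetricSpace X] {G : SimpleGraph X}

theorem edgeLen_le_dist (hmax : PathMaxProperty G) {v w : X} {p : G.Walk v w} (hp : p.IsPath)
    {e : Sym2 X} (he : e ∈ p.edges) : edgeLen e ≤ dist v w := by
  rcases eq_or_ne v w with rfl | hvw
  · simp [Walk.edges_eq_nil.mpr (Walk.isPath_iff_nil.mp hp)] at he
  · exact (hmax v w hvw p hp).2 e he

theorem dist_le_max_s17 (hmax : PathMaxProperty G) {x y z : X} (hxy : G.Reachable x y)
    (hyz : G.Reachable y z) : dist x z ≤ max (dist x y) (dist y z) := by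
  classical
  rcases eq_or_ne x z with rfl | hxz
  · simp
  obtain ⟨p⟩ := hxy
  obtain ⟨q⟩ := hyz
  -- The path from `x` to `z` inside `pq` has an edge of length `dist x z`, which lies on the
  -- path from `x` to `y` or on the one from `y` to `z`.
  let pq := p.bypass.append q.bypass
  obtain ⟨e, he, hlen⟩ := (hmax x z hxz pq.bypass pq.bypass_isPath).1
  have he' : e ∈ p.bypass.edges ∨ e ∈ q.bypass.edges := by
    simpa only [pq, Walk.edges_append, List.mem_append] using pq.edges_bypass_subset_edges he
  rw [← hlen]
  rcases he' with hp | hq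
  · exact le_max_of_le_left (hmax.edgeLen_le_dist p.bypass_isPath hp)
  · exact le_max_of_le_right (hmax.edgeLen_le_dist q.bypass_isPath hq)

end PathMaxProperty

theorem ultrametric_of_pathMax_general {X : Type*} [MetricSpace X]
    (G : SimpleGraph X) (hG : G.IsTree) (hmax : PathMaxProperty G) :
    ∀ x y z : X, dist x z ≤ max (dist x y) (dist y z) :=
  fun x y z => hmax.dist_le_max_s17 (hG.connected.preconnected x y) (hG.connected.preconnected y z)

/-- If a finite metric space `X` admits a spanning tree `G` such that for all
distinct `v, w ∈ X` the distance `|vw|` equals the maximum edge length along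
the unique path in `G` from `v` to `w`, then `X` is ultrametric. -/
theorem ultrametric_of_pathMax {X : Type*} [MetricSpace X] [Finite X]
    (G : SimpleGraph X) (hG : G.IsTree) (hmax : PathMaxProperty G) :
    ∀ x y z : X, dist x z ≤ max (dist x y) (dist y z) :=
  ultrametric_of_pathMax_general G hG hmax
end
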